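/- arXiv:1708.07930 — 7 statements merged into one kernel-verified Lean document; each statement's English description precedes it below -/
import Mathlib

section
/- Suppose 0 < P^ℓ < 1 < P^u. Then for every vector Q ∈ ℝ^R, the worst-case expectation over the ambiguity set equals a combination of an expectation under the lower bound and a CVaR-type infimum: sup_{f ∈ D} Σ_{r=1}^R f^r Q^r = Σ_{r=1}^R f_ℓ^r Q^r + inf_{u ∈ ℝ} [ (1 − P^ℓ) u + Σ_{r=1}^R (f_u^r − f_ℓ^r) max(Q^r − u, 0) ]. -/
/-- Suppose 0 < P^ℓ < 1 < P^u. Then for every vector Q ∈ ℝ^R, the worst-case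
expectation over the ambiguity set equals a combination of an expectation under the lower
bound and a CVaR-type infimum. -/
theorem worst_case_expectation_eq_expectation_add_cvar_infimum
    (R : ℕ) (hR : 1 ≤ R) (fl fu : Fin R → ℝ)
    (hfl : ∀ r, 0 ≤ fl r) (hlu : ∀ r, fl r ≤ fu r)
    (hPl0 : 0 < ∑ r, fl r) (hPl1 : (∑ r, fl r) < 1) (hPu : 1 < ∑ r, fu r)
    (Q : Fin R → ℝ) :
    sSup ((fun f : Fin R → ℝ => ∑ r, f r * Q r) ''
        {f | (∀ r, fl r ≤ f r ∧ f r ≤ fu r) ∧ ∑ r, f r = 1}) =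
      (∑ r, fl r * Q r) +
        ⨅ u : ℝ, ((1 - ∑ r, fl r) * u + ∑ r, (fu r - fl r) * max (Q r - u) 0) := by
  classical
  have hRpos : 0 < R := hR
  haveI : Nonempty (Fin R) := ⟨⟨0, hRpos⟩⟩
  set h : ℝ → ℝ := fun u => (1 - ∑ r, fl r) * u + ∑ r, (fu r - fl r) * max (Q r - u) 0
    with hh_def
  set s : ℝ := 1 - ∑ r, fl r with hs_def
  have hs0 : 0 < s := by rw [hs_def]; linarith
  set d : Fin R → ℝ := fun r => fu r - fl r with hd_def
  have hd0 : ∀ r, 0 ≤ d r := fun r => sub_nonneg.2 (hlu r)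
  have hsum_d : ∑ r, d r = (∑ r, fu r) - ∑ r, fl r := by
    rw [hd_def, Finset.sum_sub_distrib]
  have hds : s < ∑ r, d r := by rw [hsum_d, hs_def]; linarith
  have hval : ∀ u, h u = s * u + ∑ r, d r * max (Q r - u) 0 := by
    intro u; rw [hh_def, hs_def, hd_def]
  -- weak duality
  have weak : ∀ f : Fin R → ℝ, (∀ r, fl r ≤ f r ∧ f r ≤ fu r) → (∑ r, f r) = 1 →
      ∀ u : ℝ, ∑ r, f r * Q r ≤ (∑ r, fl r * Q r) + h u := by
    intro f hf hf1 u
    have key : ∀ r ∈ Finset.univ, (f r - fl r) * (Q r - u) ≤ d r * max (Q r - u) 0 := by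
      intro r _
      rcases le_or_gt (Q r - u) 0 with hq | hq
      · have h1 : (f r - fl r) * (Q r - u) ≤ 0 :=
          mul_nonpos_of_nonneg_of_nonpos (sub_nonneg.2 (hf r).1) hq
        have h2 : 0 ≤ d r * max (Q r - u) 0 :=
          mul_nonneg (hd0 r) (le_max_right _ _)
        linarith
      · rw [max_eq_left hq.le]
        have : f r - fl r ≤ d r := by
          have := (hf r).2; rw [hd_def]; simp only; linarith
        exact mul_le_mul_of_nonneg_right this hq.le
    have hsum : ∑ r, (f r - fl r) * (Q r - u) ≤ ∑ r, d r * max (Q r - u) 0 :=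
      Finset.sum_le_sum key
    have expand : ∑ r, (f r - fl r) * (Q r - u)
        = (∑ r, f r * Q r) - (∑ r, fl r * Q r) - s * u := by
      have e : ∀ r ∈ Finset.univ,
          (f r - fl r) * (Q r - u) = f r * Q r - fl r * Q r - (f r * u - fl r * u) := by
        intro r _; ring
      rw [Finset.sum_congr rfl e, Finset.sum_sub_distrib, Finset.sum_sub_distrib,
        Finset.sum_sub_distrib, ← Finset.sum_mul, ← Finset.sum_mul, hf1, hs_def]
      ring
    rw [hval u]; linarith
  -- threshold construction
  set T : ℝ → ℝ := fun u => ∑ j ∈ Finset.univ.filter (fun j => u ≤ Q j), d j with hT_def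
  set S : Finset (Fin R) := Finset.univ.filter (fun r => s ≤ T (Q r)) with hS_def
  have hSne : S.Nonempty := by
    obtain ⟨r0, -, hr0⟩ := Finset.exists_min_image Finset.univ Q Finset.univ_nonempty
    refine ⟨r0, ?_⟩
    rw [hS_def, Finset.mem_filter]
    refine ⟨Finset.mem_univ _, ?_⟩
    have : Finset.univ.filter (fun j => Q r0 ≤ Q j) = Finset.univ := by
      apply Finset.filter_true_of_mem
      intro j _; exact hr0 j (Finset.mem_univ _)
    rw [hT_def]; simp only; rw [this]
    exact hds.le
  obtain ⟨rs, hrsS, hrsmax⟩ := Finset.exists_max_image S Q hSne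
  set us : ℝ := Q rs with hus_def
  set A : ℝ := ∑ j ∈ Finset.univ.filter (fun j => us < Q j), d j with hA_def
  set C : ℝ := ∑ j ∈ Finset.univ.filter (fun j => Q j = us), d j with hC_def
  have hB : s ≤ A + C := by
    have hmem := hrsS
    rw [hS_def, Finset.mem_filter] at hmem
    have hBval : T us = A + C := by
      rw [hT_def]; simp only
      rw [hA_def, hC_def, ← Finset.sum_union]
      · apply Finset.sum_congr
        · ext j
          simp only [Finset.mem_union, Finset.mem_filter, Finset.mem_univ, true_and]
          constructor
          · intro hj; rcases hj.lt_or_eq with h1 | h1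
            · exact Or.inl h1
            · exact Or.inr h1.symm
          · rintro (h1 | h1); · exact h1.le
            · exact h1.ge
        · intros; rfl
      · rw [Finset.disjoint_filter]
        intro j _ hj hj'; exact absurd hj' (ne_of_gt hj)
    rw [← hBval]; exact hmem.2
  have hA : A ≤ s := by
    rcases (Finset.univ.filter (fun j => us < Q j)).eq_empty_or_nonempty with he | hne
    · rw [hA_def, he, Finset.sum_empty]; exact hs0.le
    · obtain ⟨jm, hjmmem, hjm⟩ := Finset.exists_min_image _ Q hne
      have hjmgt : us < Q jm := (Finset.mem_filter.1 hjmmem).2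
      have hAeq : A = T (Q jm) := by
        rw [hA_def, hT_def]; simp only
        apply Finset.sum_congr _ (fun _ _ => rfl)
        ext j
        simp only [Finset.mem_filter, Finset.mem_univ, true_and]
        constructor
        · intro hj; exact hjm j (Finset.mem_filter.2 ⟨Finset.mem_univ _, hj⟩)
        · intro hj; exact lt_of_lt_of_le hjmgt hj
      have hjmnS : jm ∉ S := by
        intro hmem
        exact absurd (hrsmax jm hmem) (not_le.2 hjmgt)
      rw [hS_def, Finset.mem_filter] at hjmnS
      push_neg at hjmnS
      have := hjmnS (Finset.mem_univ _)
      rw [hAeq]; exact (this).le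
  have hC0 : 0 ≤ C := Finset.sum_nonneg fun j _ => hd0 j
  set t : ℝ := if C = 0 then 0 else (s - A) / C with ht_def
  have ht0 : 0 ≤ t := by
    rw [ht_def]; split
    · exact le_refl 0
    · apply div_nonneg (by linarith) hC0
  have ht1 : t ≤ 1 := by
    rw [ht_def]; split
    · exact zero_le_one
    · rw [div_le_one (lt_of_le_of_ne hC0 (Ne.symm (by assumption)))]
      linarith
  have htC : t * C = s - A := by
    rw [ht_def]; split
    · rename_i hC
      rw [hC] at hB
      rw [hC]; ring_nf; linarith
    · exact div_mul_cancel₀ _ (by assumption)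
  set g : Fin R → ℝ := fun j => if us < Q j then d j else if Q j = us then t * d j else 0
    with hg_def
  have hg0 : ∀ j, 0 ≤ g j := by
    intro j; rw [hg_def]; simp only
    split
    · exact hd0 j
    · split
      · exact mul_nonneg ht0 (hd0 j)
      · exact le_refl 0
  have hgd : ∀ j, g j ≤ d j := by
    intro j; rw [hg_def]; simp only
    split
    · exact le_refl _
    · split
      · calc t * d j ≤ 1 * d j := mul_le_mul_of_nonneg_right ht1 (hd0 j)
          _ = d j := one_mul _
      · exact hd0 j
  have hgA : ∑ j ∈ Finset.univ.filter (fun j => us < Q j), g j = A := by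
    rw [hA_def]
    apply Finset.sum_congr rfl
    intro j hj
    have := (Finset.mem_filter.1 hj).2
    rw [hg_def]; simp only [if_pos this]
  have hgC : ∑ j ∈ Finset.univ.filter (fun j => Q j = us), g j = t * C := by
    rw [hC_def, Finset.mul_sum]
    apply Finset.sum_congr rfl
    intro j hj
    have hje := (Finset.mem_filter.1 hj).2
    have hnlt : ¬ us < Q j := by rw [hje]; exact lt_irrefl us
    rw [hg_def]; simp only [if_neg hnlt, if_pos hje]
  have hgsum : ∑ j, g j = s := by
    rw [← Finset.sum_filter_add_sum_filter_not Finset.univ (fun j => us < Q j) g, hgA]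
    rw [← Finset.sum_filter_add_sum_filter_not
      (Finset.univ.filter (fun j => ¬ us < Q j)) (fun j => Q j = us) g]
    have e1 : (Finset.univ.filter (fun j => ¬ us < Q j)).filter (fun j => Q j = us)
        = Finset.univ.filter (fun j => Q j = us) := by
      rw [Finset.filter_filter]
      apply Finset.filter_congr
      intro j _
      simp only [and_iff_right_iff_imp]
      intro hje; rw [hje]; exact lt_irrefl us
    have e2 : ∑ j ∈ (Finset.univ.filter (fun j => ¬ us < Q j)).filter
        (fun j => ¬ Q j = us), g j = 0 := by
      apply Finset.sum_eq_zero
      intro j hj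
      simp only [Finset.mem_filter, Finset.mem_univ, true_and] at hj
      rw [hg_def]; simp only; rw [if_neg hj.1, if_neg hj.2]
    rw [e1, hgC, e2, htC]; ring
  -- the optimal point
  set fstar : Fin R → ℝ := fun j => fl j + g j with hfstar_def
  have hfstar_mem : (∀ r, fl r ≤ fstar r ∧ fstar r ≤ fu r) ∧ ∑ r, fstar r = 1 := by
    constructor
    · intro r
      constructor
      · rw [hfstar_def]; simp only; linarith [hg0 r]
      · rw [hfstar_def]; simp only
        have := hgd r; rw [hd_def] at this; simp only at this; linarith
    · rw [hfstar_def, Finset.sum_add_distrib, hgsum, hs_def]; ring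
  have hkey : ∀ j, g j * (Q j - us) = d j * max (Q j - us) 0 := by
    intro j
    by_cases h1 : us < Q j
    · rw [hg_def]; simp only [if_pos h1]
      rw [max_eq_left (by linarith)]
    · by_cases h2 : Q j = us
      · rw [h2]; simp
      · rw [hg_def]; simp only [if_neg h1, if_neg h2]
        rw [max_eq_right (by push_neg at h1; linarith)]
        ring
  have hfstar_val : ∑ r, fstar r * Q r = (∑ r, fl r * Q r) + h us := by
    rw [hval us]
    have e : ∀ r ∈ Finset.univ, fstar r * Q r = fl r * Q r + (g r * (Q r - us) + g r * us) := by
      intro r _; rw [hfstar_def]; ring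
    rw [Finset.sum_congr rfl e, Finset.sum_add_distrib, Finset.sum_add_distrib,
      ← Finset.sum_mul, hgsum, Finset.sum_congr rfl (fun r _ => hkey r)]
    ring
  -- infimum
  have hhmin : ∀ u, h us ≤ h u := by
    intro u
    have := weak fstar hfstar_mem.1 hfstar_mem.2 u
    rw [hfstar_val] at this
    linarith
  have hbdd : BddBelow (Set.range h) := ⟨h us, by rintro x ⟨u, rfl⟩; exact hhmin u⟩
  have hinf : ⨅ u, h u = h us := le_antisymm (ciInf_le hbdd us) (le_ciInf hhmin)
  -- supremum
  set M : ℝ := (∑ r, fl r * Q r) + h us with hM_def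
  have hub : ∀ x ∈ ((fun f : Fin R → ℝ => ∑ r, f r * Q r) ''
      {f | (∀ r, fl r ≤ f r ∧ f r ≤ fu r) ∧ ∑ r, f r = 1}), x ≤ M := by
    rintro x ⟨f, ⟨hf1, hf2⟩, rfl⟩
    exact weak f hf1 hf2 us
  have hmem : M ∈ ((fun f : Fin R → ℝ => ∑ r, f r * Q r) ''
      {f | (∀ r, fl r ≤ f r ∧ f r ≤ fu r) ∧ ∑ r, f r = 1}) :=
    ⟨fstar, hfstar_mem, hfstar_val⟩
  rw [hinf, ← hM_def]
  exact le_antisymm (csSup_le ⟨M, hmem⟩ hub) (le_csSup ⟨M, hub⟩ hmem)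
end

section
/- Suppose P^ℓ ≤ 1. Then for every f ∈ D, every u ∈ ℝ, and every Q ∈ ℝ^R, one has Σ_{r=1}^R f^r Q^r ≤ Σ_{r=1}^R f_ℓ^r Q^r + (1 − P^ℓ) u + Σ_{r=1}^R (f_u^r − f_ℓ^r) max(Q^r − u, 0). In particular, the right-hand side expression is, for every u, an upper bound on the worst-case expectation sup_{f ∈ D} Σ_r f^r Q^r. -/
/-- Suppose P^ℓ ≤ 1. Then for every f ∈ D, every u ∈ ℝ, and every Q ∈ ℝ^R, the
expectation under f is bounded above by the expectation under fℓ plus the CVaR-type term. -/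
theorem expectation_le_lower_expectation_add_cvar_term
    (R : ℕ) (hR : 1 ≤ R) (fl fu : Fin R → ℝ)
    (hfl : ∀ r, 0 ≤ fl r) (hlu : ∀ r, fl r ≤ fu r)
    (hPl : (∑ r, fl r) ≤ 1)
    (f : Fin R → ℝ)
    (hf : (∀ r, fl r ≤ f r ∧ f r ≤ fu r) ∧ ∑ r, f r = 1)
    (u : ℝ) (Q : Fin R → ℝ) :
    ∑ r, f r * Q r ≤
      (∑ r, fl r * Q r) + (1 - ∑ r, fl r) * u +
        ∑ r, (fu r - fl r) * max (Q r - u) 0 := by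
  obtain ⟨hb, hs⟩ := hf
  have key : ∀ r, f r * Q r ≤ fl r * Q r + (f r - fl r) * u +
      (fu r - fl r) * max (Q r - u) 0 := by
    intro r
    have h1 : fl r ≤ f r := (hb r).1
    have h2 : f r ≤ fu r := (hb r).2
    have hQ : Q r ≤ u + max (Q r - u) 0 := by
      rcases le_total (Q r) u with h | h
      · simp [max_eq_right (by linarith : Q r - u ≤ 0)]; linarith
      · simp [max_eq_left (by linarith : 0 ≤ Q r - u)]
    have hm : 0 ≤ max (Q r - u) 0 := le_max_right _ _
    nlinarith [mul_le_mul_of_nonneg_left hQ (by linarith : 0 ≤ f r - fl r),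
      mul_le_mul_of_nonneg_right (by linarith : f r - fl r ≤ fu r - fl r) hm]
  calc ∑ r, f r * Q r ≤ ∑ r, (fl r * Q r + (f r - fl r) * u +
        (fu r - fl r) * max (Q r - u) 0) := Finset.sum_le_sum fun r _ => key r
    _ = (∑ r, fl r * Q r) + (1 - ∑ r, fl r) * u +
        ∑ r, (fu r - fl r) * max (Q r - u) 0 := by
      simp only [Finset.sum_add_distrib, sub_mul, Finset.sum_sub_distrib,
        ← Finset.sum_mul, hs]
end

section
/- Suppose 0 < P^ℓ < 1 < P^u. Set α = (P^u − 1)/(P^u − P^ℓ), which lies in (0,1), and define the probability vectors p^ℓ = f_ℓ / P^ℓ and p^{u−ℓ} = (f_u − f_ℓ)/(P^u − P^ℓ). Then for every Q ∈ ℝ^R: sup_{f ∈ D} Σ_{r=1}^R f^r Q^r = P^ℓ Σ_{r=1}^R p^{ℓ,r} Q^r + (1 − P^ℓ) CVaR_α^{p^{u−ℓ}}[Q]. -/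
/-!
Shifting by `f_ℓ`, the worst-case expectation is a fractional knapsack problem: distribute
the mass `1 - P^ℓ` over the capacities `f_u - f_ℓ` so as to maximize the payoff `Q`. Its LP
dual is `inf_u ((1 - P^ℓ) u + Σ_r (f_u^r - f_ℓ^r) max(Q^r - u, 0))`, which after rescaling is
`(1 - P^ℓ) CVaR_α^{p^{u-ℓ}}[Q]`. Weak duality holds termwise, and the greedy solution (fill the
capacities in decreasing order of `Q`, splitting at a threshold `t`) satisfies complementary
slackness with the dual point `u = t`, so there is no duality gap.
-/

open Finset

lemma mul_le_mul_max_zero {x c y : ℝ} (hx : 0 ≤ x) (hxc : x ≤ c) : x * y ≤ c * max y 0 := by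
  rcases le_total y 0 with hy | hy
  · rw [max_eq_right hy, mul_zero]
    exact mul_nonpos_of_nonneg_of_nonpos hx hy
  · rw [max_eq_left hy]
    exact mul_le_mul_of_nonneg_right hxc hy

lemma mul_eq_mul_max_zero {x c y : ℝ} (hpos : 0 < y → x = c) (hneg : y < 0 → x = 0) :
    x * y = c * max y 0 := by
  rcases lt_trichotomy y 0 with hy | rfl | hy
  · rw [hneg hy, max_eq_right hy.le]; ring
  · simp
  · rw [hpos hy, max_eq_left hy.le]

lemma exists_upper_weighted_quantile {ι : Type*} (Q c : ι → ℝ) (s : Finset ι)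
    (hc : ∀ i, 0 ≤ c i) {a : ℝ} (ha : 0 < a) (hac : a ≤ ∑ i ∈ s, c i) :
    ∃ t, ∑ i ∈ s with t < Q i, c i < a ∧ a ≤ ∑ i ∈ s with t ≤ Q i, c i := by
  set T := s.filter fun r => a ≤ ∑ i ∈ s with Q r ≤ Q i, c i
  have hT : T.Nonempty := by
    have hs : s.Nonempty := nonempty_of_sum_ne_zero (f := c) (by linarith)
    obtain ⟨r, hr, hmin⟩ := s.exists_min_image Q hs
    refine ⟨r, mem_filter.2 ⟨hr, ?_⟩⟩
    rwa [filter_true_of_mem hmin]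
  obtain ⟨r, hrT, hmax⟩ := T.exists_max_image Q hT
  refine ⟨Q r, ?_, (mem_filter.1 hrT).2⟩
  rcases (s.filter fun i => Q r < Q i).eq_empty_or_nonempty with hA | hA
  · rwa [hA, sum_empty]
  -- the smallest value of `Q` above the threshold is not in `T`, by maximality of `Q r`
  obtain ⟨r', hr'A, hmin'⟩ := (s.filter fun i => Q r < Q i).exists_min_image Q hA
  have hr' := mem_filter.1 hr'A
  have hr'T : r' ∉ T := fun h => (hmax r' h).not_gt hr'.2
  calc ∑ i ∈ s with Q r < Q i, c i
      ≤ ∑ i ∈ s with Q r' ≤ Q i, c i :=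
        sum_le_sum_of_subset_of_nonneg (fun i hi => mem_filter.2
          ⟨(mem_filter.1 hi).1, hmin' i hi⟩) fun i _ _ => hc i
    _ < a := not_le.1 fun h => hr'T (mem_filter.2 ⟨hr'.1, h⟩)

section BoxLP

variable {ι : Type*} [Fintype ι] {l h f Q : ι → ℝ} {m : ℝ}

lemma sum_mul_eq_add_sum_sub_mul (hf : ∑ i, f i = m) (u : ℝ) :
    ∑ i, f i * Q i =
      ∑ i, l i * Q i + ((m - ∑ i, l i) * u + ∑ i, (f i - l i) * (Q i - u)) := by
  simp only [← hf, sub_mul, mul_sub, sum_sub_distrib, sum_mul]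
  ring

lemma sum_mul_le_dual (hbox : ∀ i, l i ≤ f i ∧ f i ≤ h i) (hf : ∑ i, f i = m) (u : ℝ) :
    ∑ i, f i * Q i ≤
      ∑ i, l i * Q i + ((m - ∑ i, l i) * u + ∑ i, (h i - l i) * max (Q i - u) 0) := by
  rw [sum_mul_eq_add_sum_sub_mul hf u]
  have := sum_le_sum fun i (_ : i ∈ univ) =>
    mul_le_mul_max_zero (y := Q i - u) (sub_nonneg.2 (hbox i).1) (sub_le_sub_right (hbox i).2 _)
  linarith

lemma sum_mul_eq_dual_of_slack {t : ℝ} (hf : ∑ i, f i = m)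
    (hup : ∀ i, t < Q i → f i = h i) (hlow : ∀ i, Q i < t → f i = l i) :
    ∑ i, f i * Q i =
      ∑ i, l i * Q i + ((m - ∑ i, l i) * t + ∑ i, (h i - l i) * max (Q i - t) 0) := by
  rw [sum_mul_eq_add_sum_sub_mul hf t]
  congr 2
  refine sum_congr rfl fun i _ => mul_eq_mul_max_zero (fun hi => ?_) (fun hi => ?_)
  · rw [hup i (sub_pos.1 hi)]
  · rw [hlow i (sub_neg.1 hi), sub_self]

-- The greedy solution is a convex combination of filling all capacities strictly above the
-- threshold and filling all capacities from the threshold up.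
lemma exists_feasible_complementary_slack (hlh : ∀ i, l i ≤ h i) (hlm : ∑ i, l i < m)
    (hmh : m ≤ ∑ i, h i) :
    ∃ f : ι → ℝ, ((∀ i, l i ≤ f i ∧ f i ≤ h i) ∧ ∑ i, f i = m) ∧
      ∃ t, (∀ i, t < Q i → f i = h i) ∧ ∀ i, Q i < t → f i = l i := by
  obtain ⟨t, hF, hG⟩ := exists_upper_weighted_quantile Q (fun i => h i - l i) univ
    (fun i => sub_nonneg.2 (hlh i)) (sub_pos.2 hlm) (by rw [sum_sub_distrib]; linarith)
  set F := ∑ i with t < Q i, (h i - l i)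
  set G := ∑ i with t ≤ Q i, (h i - l i)
  set θ := (m - ∑ i, l i - F) / (G - F)
  have hθ0 : 0 ≤ θ := div_nonneg (by linarith) (by linarith)
  have hθ1 : θ ≤ 1 := (div_le_one (by linarith)).2 (by linarith)
  refine ⟨fun i => l i + ((1 - θ) * (if t < Q i then h i - l i else 0) +
      θ * (if t ≤ Q i then h i - l i else 0)),
    ⟨fun i => ?_, ?_⟩, t, fun i hi => ?_, fun i hi => ?_⟩
  · have := hlh i
    dsimp only
    split_ifs <;> constructor <;> nlinarith
  · have hθ : θ * (G - F) = m - ∑ i, l i - F := div_mul_cancel₀ _ (by linarith)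
    simp only [sum_add_distrib, ← mul_sum, ← sum_filter]
    linear_combination hθ
  · simp only [hi, hi.le, if_true]
    ring
  · simp only [hi.not_gt, hi.not_ge, if_false]
    ring

theorem sSup_image_sum_mul_eq_add_iInf (hlh : ∀ i, l i ≤ h i) (hlm : ∑ i, l i < m)
    (hmh : m ≤ ∑ i, h i) :
    sSup ((fun f : ι → ℝ => ∑ i, f i * Q i) ''
        {f | (∀ i, l i ≤ f i ∧ f i ≤ h i) ∧ ∑ i, f i = m}) =
      ∑ i, l i * Q i +
        ⨅ u : ℝ, ((m - ∑ i, l i) * u + ∑ i, (h i - l i) * max (Q i - u) 0) := by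
  obtain ⟨f, hf, t, hup, hlow⟩ := exists_feasible_complementary_slack (Q := Q) hlh hlm hmh
  have hopt := sum_mul_eq_dual_of_slack hf.2 hup hlow
  have hsup : sSup ((fun f : ι → ℝ => ∑ i, f i * Q i) ''
      {f | (∀ i, l i ≤ f i ∧ f i ≤ h i) ∧ ∑ i, f i = m}) = ∑ i, f i * Q i := by
    refine IsGreatest.csSup_eq ⟨⟨f, hf, rfl⟩, ?_⟩
    rintro _ ⟨g, hg, rfl⟩
    rw [hopt]
    exact sum_mul_le_dual hg.1 hg.2 t
  have hinf : (⨅ u : ℝ, ((m - ∑ i, l i) * u + ∑ i, (h i - l i) * max (Q i - u) 0)) =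
      (m - ∑ i, l i) * t + ∑ i, (h i - l i) * max (Q i - t) 0 := by
    refine IsLeast.csInf_eq ⟨⟨t, rfl⟩, ?_⟩
    rintro _ ⟨u, rfl⟩
    have := sum_mul_le_dual (Q := Q) hf.1 hf.2 u
    linarith
  rw [hsup, hinf, hopt]

end BoxLP

theorem worst_case_expectation_eq_convex_combination_expectation_cvar_general
    (R : ℕ) (fl fu : Fin R → ℝ)
    (hlu : ∀ r, fl r ≤ fu r)
    (hPl0 : 0 < ∑ r, fl r) (hPl1 : (∑ r, fl r) < 1) (hPu : 1 < ∑ r, fu r)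
    (Q : Fin R → ℝ) :
    (0 < ((∑ r, fu r) - 1) / ((∑ r, fu r) - ∑ r, fl r) ∧
      ((∑ r, fu r) - 1) / ((∑ r, fu r) - ∑ r, fl r) < 1) ∧
    sSup ((fun f : Fin R → ℝ => ∑ r, f r * Q r) ''
        {f | (∀ r, fl r ≤ f r ∧ f r ≤ fu r) ∧ ∑ r, f r = 1}) =
      (∑ r, fl r) * (∑ r, (fl r / ∑ r', fl r') * Q r) +
        (1 - ∑ r, fl r) *
          ⨅ u : ℝ, (u + (1 - ((∑ r, fu r) - 1) / ((∑ r, fu r) - ∑ r, fl r))⁻¹ *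
            ∑ r, ((fu r - fl r) / ((∑ r', fu r') - ∑ r', fl r')) * max (Q r - u) 0) := by
  have hgap : 0 < (∑ r, fu r) - ∑ r, fl r := by linarith
  refine ⟨⟨div_pos (by linarith) hgap, (div_lt_one hgap).2 (by linarith)⟩, ?_⟩
  have hmean : (∑ r, fl r) * ∑ r, (fl r / ∑ r', fl r') * Q r = ∑ r, fl r * Q r := by
    rw [mul_sum]
    exact sum_congr rfl fun r _ => by field_simp
  have hα : 1 - ((∑ r, fu r) - 1) / ((∑ r, fu r) - ∑ r, fl r) =
      (1 - ∑ r, fl r) / ((∑ r, fu r) - ∑ r, fl r) := by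
    field_simp
    ring
  have hcvar : ∀ u : ℝ, (1 - ∑ r, fl r) *
      (u + (1 - ((∑ r, fu r) - 1) / ((∑ r, fu r) - ∑ r, fl r))⁻¹ *
        ∑ r, ((fu r - fl r) / ((∑ r', fu r') - ∑ r', fl r')) * max (Q r - u) 0) =
      (1 - ∑ r, fl r) * u + ∑ r, (fu r - fl r) * max (Q r - u) 0 := by
    intro u
    simp_rw [hα, div_mul_eq_mul_div, ← sum_div]
    field_simp [(sub_pos.2 hPl1).ne']
  rw [hmean, Real.mul_iInf_of_nonneg (by linarith), iInf_congr hcvar]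
  exact sSup_image_sum_mul_eq_add_iInf hlu hPl1 hPu.le

/-- With α = (P^u − 1)/(P^u − P^ℓ) ∈ (0,1), p^ℓ = f_ℓ/P^ℓ, and
p^{u−ℓ} = (f_u − f_ℓ)/(P^u − P^ℓ), the worst-case expectation over the ambiguity set equals
P^ℓ · E_{p^ℓ}[Q] + (1 − P^ℓ) · CVaR_α^{p^{u−ℓ}}[Q], where
CVaR_α^q[Q] = inf_u { u + (1−α)⁻¹ Σ_r q^r max(Q^r − u, 0) }. -/
theorem worst_case_expectation_eq_convex_combination_expectation_cvar
    (R : ℕ) (hR : 1 ≤ R) (fl fu : Fin R → ℝ)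
    (hfl : ∀ r, 0 ≤ fl r) (hlu : ∀ r, fl r ≤ fu r)
    (hPl0 : 0 < ∑ r, fl r) (hPl1 : (∑ r, fl r) < 1) (hPu : 1 < ∑ r, fu r)
    (Q : Fin R → ℝ) :
    (0 < ((∑ r, fu r) - 1) / ((∑ r, fu r) - ∑ r, fl r) ∧
      ((∑ r, fu r) - 1) / ((∑ r, fu r) - ∑ r, fl r) < 1) ∧
    sSup ((fun f : Fin R → ℝ => ∑ r, f r * Q r) ''
        {f | (∀ r, fl r ≤ f r ∧ f r ≤ fu r) ∧ ∑ r, f r = 1}) =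
      (∑ r, fl r) * (∑ r, (fl r / ∑ r', fl r') * Q r) +
        (1 - ∑ r, fl r) *
          ⨅ u : ℝ, (u + (1 - ((∑ r, fu r) - 1) / ((∑ r, fu r) - ∑ r, fl r))⁻¹ *
            ∑ r, ((fu r - fl r) / ((∑ r', fu r') - ∑ r', fl r')) * max (Q r - u) 0) :=
  worst_case_expectation_eq_convex_combination_expectation_cvar_general R fl fu hlu hPl0 hPl1 hPu Q
end

section
/- Let f^{(N)} ∈ ℝ^R be a sequence of probability vectors converging componentwise to a probability vector f*, and let d_N ≥ 0 with d_N → 0 as N → ∞. Then for every Q ∈ ℝ^R, the worst-case expectation converges to the expectation under f*: sup_{f ∈ D(f^{(N)}, d_N)} Σ_{r=1}^R f^r Q^r → Σ_{r=1}^R f*^r Q^r as N → ∞. -/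
/-- If probability vectors f^{(N)} converge componentwise to a probability vector
f* and the tolerances d_N ≥ 0 converge to 0, then for every Q ∈ ℝ^R the worst-case expectation
over D(f^{(N)}, d_N) converges to the expectation under f*. -/
theorem worst_case_expectation_tendsto_true_expectation
    (R : ℕ) (hR : 1 ≤ R)
    (fN : ℕ → Fin R → ℝ)
    (hfN : ∀ N, (∀ r, 0 ≤ fN N r) ∧ ∑ r, fN N r = 1)
    (fstar : Fin R → ℝ)
    (hfstar : (∀ r, 0 ≤ fstar r) ∧ ∑ r, fstar r = 1)
    (hconv : ∀ r, Filter.Tendsto (fun N => fN N r) Filter.atTop (nhds (fstar r)))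
    (dN : ℕ → ℝ) (hdN : ∀ N, 0 ≤ dN N)
    (hd0 : Filter.Tendsto dN Filter.atTop (nhds 0))
    (Q : Fin R → ℝ) :
    Filter.Tendsto
      (fun N => sSup ((fun f : Fin R → ℝ => ∑ r, f r * Q r) ''
        {f | (∀ r, 0 ≤ f r ∧ |f r - fN N r| ≤ dN N) ∧ ∑ r, f r = 1}))
      Filter.atTop (nhds (∑ r, fstar r * Q r)) := by
  set S : ℕ → Set ℝ := fun N => ((fun f : Fin R → ℝ => ∑ r, f r * Q r) ''
    {f | (∀ r, 0 ≤ f r ∧ |f r - fN N r| ≤ dN N) ∧ ∑ r, f r = 1}) with hS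
  have key : ∀ N, ∀ x ∈ S N, x ≤ (∑ r, fN N r * Q r) + dN N * ∑ r, |Q r| := by
    rintro N x ⟨f, ⟨hf1, hf2⟩, rfl⟩
    have h : ∑ r, f r * Q r - ∑ r, fN N r * Q r ≤ dN N * ∑ r, |Q r| := by
      rw [← Finset.sum_sub_distrib]
      calc ∑ r, (f r * Q r - fN N r * Q r) ≤ ∑ r, dN N * |Q r| := by
            apply Finset.sum_le_sum; intro r _
            have hfr := (hf1 r).2
            have h1 : f r * Q r - fN N r * Q r = (f r - fN N r) * Q r := by ring
            rw [h1]
            calc (f r - fN N r) * Q r ≤ |(f r - fN N r) * Q r| := le_abs_self _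
              _ = |f r - fN N r| * |Q r| := abs_mul _ _
              _ ≤ dN N * |Q r| := mul_le_mul_of_nonneg_right hfr (abs_nonneg _)
        _ = dN N * ∑ r, |Q r| := by rw [Finset.mul_sum]
    linarith
  have mem : ∀ N, (∑ r, fN N r * Q r) ∈ S N := by
    intro N
    exact ⟨fN N, ⟨fun r => ⟨(hfN N).1 r, by simp [hdN N]⟩, (hfN N).2⟩, rfl⟩
  have lower : ∀ N, ∑ r, fN N r * Q r ≤ sSup (S N) := fun N =>
    le_csSup ⟨_, key N⟩ (mem N)
  have upper : ∀ N, sSup (S N) ≤ (∑ r, fN N r * Q r) + dN N * ∑ r, |Q r| := fun N =>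
    csSup_le ⟨_, mem N⟩ (key N)
  have hA : Filter.Tendsto (fun N => ∑ r, fN N r * Q r) Filter.atTop
      (nhds (∑ r, fstar r * Q r)) :=
    tendsto_finset_sum _ fun r _ => (hconv r).mul_const (Q r)
  have hB : Filter.Tendsto (fun N => (∑ r, fN N r * Q r) + dN N * ∑ r, |Q r|)
      Filter.atTop (nhds (∑ r, fstar r * Q r)) := by
    have := hA.add (hd0.mul_const (∑ r, |Q r|))
    simpa using this
  exact tendsto_of_tendsto_of_tendsto_of_le_of_le hA hB lower upper
end

section
/- Let K be a nonempty compact subset of ℝ^n, let h : K → ℝ and h_N : K → ℝ (for N ∈ ℕ) be continuous functions, and suppose h_N converges to h uniformly on K. Let M_N = { x ∈ K : h_N(x) = min_{y ∈ K} h_N(y) } and M = { x ∈ K : h(x) = min_{y ∈ K} h(y) } denote the sets of optimal solutions. Then the optimal solution sets converge in the sense that sup_{x ∈ M_N} dist(x, M) → 0 as N → ∞, where dist(x, M) = inf_{y ∈ M} ‖x − y‖. -/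
/-- If continuous functions h_N converge uniformly on a nonempty compact set
K ⊆ ℝ^n to a continuous function h, then the sets of minimizers M_N of h_N converge to the set
of minimizers M of h, in the sense that sup_{x ∈ M_N} dist(x, M) → 0. -/
theorem minimizer_sets_tendsto_of_tendstoUniformlyOn
    (n : ℕ) (K : Set (EuclideanSpace ℝ (Fin n)))
    (hK : IsCompact K) (hKne : K.Nonempty)
    (h : EuclideanSpace ℝ (Fin n) → ℝ)
    (hN : ℕ → EuclideanSpace ℝ (Fin n) → ℝ)
    (hcont : ContinuousOn h K)
    (hNcont : ∀ N, ContinuousOn (hN N) K)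
    (hunif : TendstoUniformlyOn hN h Filter.atTop K) :
    Filter.Tendsto
      (fun N => sSup ((fun x => Metric.infDist x {y ∈ K | h y = sInf (h '' K)}) ''
        {x ∈ K | hN N x = sInf (hN N '' K)}))
      Filter.atTop (nhds 0) := by
  set m := sInf (h '' K) with hm
  set M : Set (EuclideanSpace ℝ (Fin n)) := {y ∈ K | h y = m} with hMdef
  have himg : IsCompact (h '' K) := hK.image_of_continuousOn hcont
  have hmmem : m ∈ h '' K := himg.sInf_mem (hKne.image h)
  obtain ⟨xs, hxsK, hxsm⟩ := hmmem
  have hbb : BddBelow (h '' K) := himg.bddBelow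
  rw [Metric.tendsto_nhds]
  intro ε hε
  -- key: near-minimizers of h are within ε/2 of M
  obtain ⟨δ, hδ, hkey⟩ : ∃ δ > 0, ∀ x ∈ K, h x < m + 3 * δ → Metric.infDist x M < ε / 2 := by
    set S : Set (EuclideanSpace ℝ (Fin n)) := K ∩ {x | ε / 2 ≤ Metric.infDist x M} with hSdef
    have hScl : IsClosed {x : EuclideanSpace ℝ (Fin n) | ε / 2 ≤ Metric.infDist x M} :=
      isClosed_le continuous_const (Metric.continuous_infDist_pt M)
    have hScomp : IsCompact S := hK.inter_right hScl
    rcases S.eq_empty_or_nonempty with hSe | hSne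
    · refine ⟨1, one_pos, fun x hx _ => ?_⟩
      by_contra hc
      have : x ∈ S := ⟨hx, le_of_not_gt hc⟩
      simp [hSe] at this
    · obtain ⟨x0, hx0S, hx0min⟩ :=
        hScomp.exists_isMinOn hSne (hcont.mono (Set.inter_subset_left))
      have hx0K : x0 ∈ K := hx0S.1
      have hx0ge : m ≤ h x0 := csInf_le hbb ⟨x0, hx0K, rfl⟩
      have hx0ne : h x0 ≠ m := by
        intro heq
        have hx0M : x0 ∈ M := ⟨hx0K, heq⟩
        have hz : Metric.infDist x0 M = 0 := Metric.infDist_zero_of_mem hx0M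
        have h2 : ε / 2 ≤ Metric.infDist x0 M := hx0S.2
        rw [hz] at h2
        linarith
      have hgt : m < h x0 := lt_of_le_of_ne hx0ge (Ne.symm hx0ne)
      refine ⟨(h x0 - m) / 3, by linarith, fun x hx hxlt => ?_⟩
      by_contra hc
      have hxS : x ∈ S := ⟨hx, le_of_not_gt hc⟩
      have := hx0min hxS
      simp only [Set.mem_setOf_eq] at this
      linarith
  have hev := (Metric.tendstoUniformlyOn_iff.mp hunif) δ hδ
  rw [Filter.eventually_atTop] at hev ⊢
  obtain ⟨N0, hN0⟩ := hev
  refine ⟨N0, fun N hNge => ?_⟩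
  have hclose := hN0 N hNge
  -- every minimizer of hN N is within ε/2 of M
  have hmem : ∀ y ∈ (fun x => Metric.infDist x M) '' {x ∈ K | hN N x = sInf (hN N '' K)},
      y < ε / 2 := by
    rintro y ⟨x, ⟨hxK, hxmin⟩, rfl⟩
    have hbbN : BddBelow (hN N '' K) := (hK.image_of_continuousOn (hNcont N)).bddBelow
    have h1 : hN N x ≤ hN N xs := hxmin ▸ csInf_le hbbN ⟨xs, hxsK, rfl⟩
    have h2 : dist (h x) (hN N x) < δ := hclose x hxK
    have h3 : dist (h xs) (hN N xs) < δ := hclose xs hxsK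
    rw [Real.dist_eq] at h2 h3
    have hle : h x < m + 3 * δ := by
      have := abs_lt.mp h2
      have := abs_lt.mp h3
      rw [hxsm] at *
      cases' abs_lt.mp h2 with a b
      cases' abs_lt.mp h3 with c d
      linarith
    exact hkey x hxK hle
  have hsup_le : sSup ((fun x => Metric.infDist x M) '' {x ∈ K | hN N x = sInf (hN N '' K)})
      ≤ ε / 2 := Real.sSup_le (fun y hy => (hmem y hy).le) (by linarith)
  have hsup_nn : 0 ≤ sSup ((fun x => Metric.infDist x M) ''
      {x ∈ K | hN N x = sInf (hN N '' K)}) :=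
    Real.sSup_nonneg (by rintro y ⟨x, _, rfl⟩; exact Metric.infDist_nonneg)
  rw [Real.dist_eq, sub_zero, abs_of_nonneg hsup_nn]
  linarith
end

section
/- Let K be a nonempty compact subset of ℝ^n, let c : ℝ^n → ℝ be continuous, and for r = 1, …, R let x ↦ Q(x, r) be continuous on ℝ^n. Let f^{(N)} ∈ ℝ^R be probability vectors converging componentwise to a probability vector f*, and let d_N ≥ 0 with d_N → 0. Define the distributionally robust optimal value ẑ_N = min_{x ∈ K} [ c(x) + sup_{f ∈ D(f^{(N)}, d_N)} Σ_{r=1}^R f^r Q(x, r) ] and the true optimal value z* = min_{x ∈ K} [ c(x) + Σ_{r=1}^R f*^r Q(x, r) ]. Then ẑ_N → z* as N → ∞. -/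
open Filter Finset

/-- The distributionally robust optimal value
ẑ_N = min_{x ∈ K} [ c(x) + sup_{f ∈ D(f^{(N)}, d_N)} Σ_r f^r Q(x,r) ] converges to the true
optimal value z* = min_{x ∈ K} [ c(x) + Σ_r f*^r Q(x,r) ] as the reference distributions
converge componentwise to f* and the tolerances d_N → 0. -/
theorem robust_optimal_value_tendsto_true_optimal_value
    (n R : ℕ) (hR : 1 ≤ R)
    (K : Set (EuclideanSpace ℝ (Fin n))) (hK : IsCompact K) (hKne : K.Nonempty)
    (c : EuclideanSpace ℝ (Fin n) → ℝ) (hc : Continuous c)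
    (Q : EuclideanSpace ℝ (Fin n) → Fin R → ℝ)
    (hQ : ∀ r, Continuous (fun x => Q x r))
    (fN : ℕ → Fin R → ℝ)
    (hfN : ∀ N, (∀ r, 0 ≤ fN N r) ∧ ∑ r, fN N r = 1)
    (fstar : Fin R → ℝ)
    (hfstar : (∀ r, 0 ≤ fstar r) ∧ ∑ r, fstar r = 1)
    (hconv : ∀ r, Filter.Tendsto (fun N => fN N r) Filter.atTop (nhds (fstar r)))
    (dN : ℕ → ℝ) (hdN : ∀ N, 0 ≤ dN N)
    (hd0 : Filter.Tendsto dN Filter.atTop (nhds 0)) :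
    Filter.Tendsto
      (fun N => sInf ((fun x => c x +
        sSup ((fun f : Fin R → ℝ => ∑ r, f r * Q x r) ''
          {f | (∀ r, 0 ≤ f r ∧ |f r - fN N r| ≤ dN N) ∧ ∑ r, f r = 1})) '' K))
      Filter.atTop
      (nhds (sInf ((fun x => c x + ∑ r, fstar r * Q x r) '' K))) := by
  obtain ⟨hfsnn, hfssum⟩ := hfstar
  -- uniform bound M on |Q x r| for x ∈ K
  have hCr : ∀ r : Fin R, ∃ C : ℝ, ∀ x ∈ K, |Q x r| ≤ C := by
    intro r
    obtain ⟨C, hC⟩ := hK.exists_bound_of_continuousOn (hQ r).continuousOn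
    exact ⟨C, fun x hx => by simpa [Real.norm_eq_abs] using hC x hx⟩
  choose C hC using hCr
  set M : ℝ := 1 + ∑ r, |C r| with hMdef
  have hM0 : 0 ≤ M := by
    have : (0:ℝ) ≤ ∑ r, |C r| := Finset.sum_nonneg fun r _ => abs_nonneg _
    simp [hMdef]; linarith
  have hM : ∀ (r : Fin R), ∀ x ∈ K, |Q x r| ≤ M := by
    intro r x hx
    have h1 : C r ≤ |C r| := le_abs_self _
    have h2 : |C r| ≤ ∑ s, |C s| :=
      Finset.single_le_sum (f := fun s => |C s|) (fun s _ => abs_nonneg _) (mem_univ r)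
    have := hC r x hx
    simp only [hMdef]; linarith
  -- error sequence
  set δ : ℕ → ℝ := fun N => ∑ r, (dN N + |fN N r - fstar r|) * M with hδdef
  have hδ0 : Tendsto δ atTop (nhds 0) := by
    have h0 : ∀ r : Fin R, Tendsto (fun N => (dN N + |fN N r - fstar r|) * M)
        atTop (nhds 0) := by
      intro r
      have h1 : Tendsto (fun N => |fN N r - fstar r|) atTop (nhds 0) := by
        have := ((hconv r).sub (tendsto_const_nhds (x := fstar r))).abs
        simpa using this
      have := (hd0.add h1).mul_const M
      simpa using this
    have := tendsto_finset_sum (univ : Finset (Fin R)) (fun r _ => h0 r)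
    simpa using this
  have hδnn : ∀ N, 0 ≤ δ N := by
    intro N
    refine Finset.sum_nonneg fun r _ => mul_nonneg ?_ hM0
    exact add_nonneg (hdN N) (abs_nonneg _)
  -- notation
  set h : EuclideanSpace ℝ (Fin n) → ℝ := fun x => c x + ∑ r, fstar r * Q x r with hhdef
  set g : ℕ → EuclideanSpace ℝ (Fin n) → ℝ := fun N x => c x +
      sSup ((fun f : Fin R → ℝ => ∑ r, f r * Q x r) ''
        {f | (∀ r, 0 ≤ f r ∧ |f r - fN N r| ≤ dN N) ∧ ∑ r, f r = 1}) with hgdef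
  -- per x facts
  have memD : ∀ N, fN N ∈ {f : Fin R → ℝ | (∀ r, 0 ≤ f r ∧ |f r - fN N r| ≤ dN N) ∧
      ∑ r, f r = 1} := by
    intro N
    exact ⟨fun r => ⟨(hfN N).1 r, by simpa using hdN N⟩, (hfN N).2⟩
  have habsle : ∀ N x, x ∈ K → ∀ f : Fin R → ℝ,
      f ∈ {f : Fin R → ℝ | (∀ r, 0 ≤ f r ∧ |f r - fN N r| ≤ dN N) ∧ ∑ r, f r = 1} →
      |∑ r, f r * Q x r| ≤ M := by
    intro N x hx f hf
    calc |∑ r, f r * Q x r| ≤ ∑ r, |f r * Q x r| := Finset.abs_sum_le_sum_abs _ _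
      _ ≤ ∑ r, f r * M := by
          refine Finset.sum_le_sum fun r _ => ?_
          rw [abs_mul, abs_of_nonneg (hf.1 r).1]
          exact mul_le_mul_of_nonneg_left (hM r x hx) (hf.1 r).1
      _ = M := by rw [← Finset.sum_mul, hf.2, one_mul]
  have hSne : ∀ N x, ((fun f : Fin R → ℝ => ∑ r, f r * Q x r) ''
      {f | (∀ r, 0 ≤ f r ∧ |f r - fN N r| ≤ dN N) ∧ ∑ r, f r = 1}).Nonempty :=
    fun N x => ⟨_, ⟨fN N, memD N, rfl⟩⟩
  have hSbdd : ∀ N x, x ∈ K → BddAbove ((fun f : Fin R → ℝ => ∑ r, f r * Q x r) ''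
      {f | (∀ r, 0 ≤ f r ∧ |f r - fN N r| ≤ dN N) ∧ ∑ r, f r = 1}) := by
    intro N x hx
    refine ⟨M, ?_⟩
    rintro y ⟨f, hf, rfl⟩
    exact le_of_abs_le (habsle N x hx f hf)
  -- diff of sums bound
  have hdiff : ∀ N x, x ∈ K → ∀ f : Fin R → ℝ,
      f ∈ {f : Fin R → ℝ | (∀ r, 0 ≤ f r ∧ |f r - fN N r| ≤ dN N) ∧ ∑ r, f r = 1} →
      |∑ r, f r * Q x r - ∑ r, fstar r * Q x r| ≤ δ N := by
    intro N x hx f hf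
    have : ∑ r, f r * Q x r - ∑ r, fstar r * Q x r = ∑ r, (f r - fstar r) * Q x r := by
      rw [← Finset.sum_sub_distrib]; congr 1; ext r; ring
    rw [this]
    calc |∑ r, (f r - fstar r) * Q x r| ≤ ∑ r, |(f r - fstar r) * Q x r| :=
          Finset.abs_sum_le_sum_abs _ _
      _ ≤ δ N := by
          refine Finset.sum_le_sum fun r _ => ?_
          rw [abs_mul]
          refine mul_le_mul ?_ (hM r x hx) (abs_nonneg _)
            (add_nonneg (hdN N) (abs_nonneg _))
          calc |f r - fstar r| ≤ |f r - fN N r| + |fN N r - fstar r| :=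
                abs_sub_le _ _ _
            _ ≤ dN N + |fN N r - fstar r| := by
                have := (hf.1 r).2; linarith
  -- sandwich for sSup
  have hsuple : ∀ N x, x ∈ K →
      sSup ((fun f : Fin R → ℝ => ∑ r, f r * Q x r) ''
        {f | (∀ r, 0 ≤ f r ∧ |f r - fN N r| ≤ dN N) ∧ ∑ r, f r = 1}) ≤
      (∑ r, fstar r * Q x r) + δ N := by
    intro N x hx
    refine csSup_le (hSne N x) ?_
    rintro y ⟨f, hf, rfl⟩
    have := hdiff N x hx f hf
    have := abs_le.mp this
    linarith [this.2]
  have hsupge : ∀ N x, x ∈ K →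
      (∑ r, fstar r * Q x r) - δ N ≤
      sSup ((fun f : Fin R → ℝ => ∑ r, f r * Q x r) ''
        {f | (∀ r, 0 ≤ f r ∧ |f r - fN N r| ≤ dN N) ∧ ∑ r, f r = 1}) := by
    intro N x hx
    have h1 : ∑ r, fN N r * Q x r ≤ sSup _ :=
      le_csSup (hSbdd N x hx) ⟨fN N, memD N, rfl⟩
    have h2 := hdiff N x hx (fN N) (memD N)
    have h3 := (abs_le.mp h2).1
    linarith
  -- continuity of h, bdd below of images
  have hhcont : Continuous h := by
    exact hc.add (continuous_finset_sum _ fun r _ => continuous_const.mul (hQ r))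
  have hAcomp : IsCompact (h '' K) := hK.image hhcont
  have hAbdd : BddBelow (h '' K) := hAcomp.bddBelow
  have hAne : (h '' K).Nonempty := hKne.image h
  obtain ⟨B, hB⟩ := hK.exists_bound_of_continuousOn hc.continuousOn
  have hB' : ∀ x ∈ K, -B ≤ c x := by
    intro x hx
    have := hB x hx
    rw [Real.norm_eq_abs] at this
    linarith [(abs_le.mp this).1]
  have hGbdd : ∀ N, BddBelow (g N '' K) := by
    intro N
    refine ⟨-B - M, ?_⟩
    rintro y ⟨x, hx, rfl⟩
    have h1 : ∑ r, fN N r * Q x r ≤ sSup _ :=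
      le_csSup (hSbdd N x hx) ⟨fN N, memD N, rfl⟩
    have h2 : -M ≤ ∑ r, fN N r * Q x r :=
      neg_le_of_abs_le (habsle N x hx (fN N) (memD N))
    have := hB' x hx
    simp only [hgdef]
    linarith
  have hGne : ∀ N, (g N '' K).Nonempty := fun N => hKne.image (g N)
  -- inf inequalities
  have key1 : ∀ N, sInf (g N '' K) ≤ sInf (h '' K) + δ N := by
    intro N
    have : sInf (g N '' K) - δ N ≤ sInf (h '' K) := by
      refine le_csInf hAne ?_
      rintro b ⟨x, hx, rfl⟩
      have h1 : sInf (g N '' K) ≤ g N x := csInf_le (hGbdd N) ⟨x, hx, rfl⟩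
      have h2 := hsuple N x hx
      simp only [hgdef, hhdef] at *
      linarith
    linarith
  have key2 : ∀ N, sInf (h '' K) ≤ sInf (g N '' K) + δ N := by
    intro N
    have : sInf (h '' K) - δ N ≤ sInf (g N '' K) := by
      refine le_csInf (hGne N) ?_
      rintro b ⟨x, hx, rfl⟩
      have h1 : sInf (h '' K) ≤ h x := csInf_le hAbdd ⟨x, hx, rfl⟩
      have h2 := hsupge N x hx
      simp only [hgdef, hhdef] at *
      linarith
    linarith
  -- conclude
  have hdist : ∀ N, dist (sInf (g N '' K)) (sInf (h '' K)) ≤ δ N := by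
    intro N
    rw [Real.dist_eq, abs_le]
    constructor <;> [linarith [key2 N]; linarith [key1 N]]
  have := squeeze_zero (fun N => dist_nonneg) hdist hδ0
  have hfin : Tendsto (fun N => sInf (g N '' K)) atTop (nhds (sInf (h '' K))) :=
    tendsto_iff_dist_tendsto_zero.mpr this
  exact hfin
end

section
/- Let K be a nonempty compact subset of ℝ^n, let c : ℝ^n → ℝ be continuous, and for r = 1, …, R let x ↦ Q(x, r) be continuous on ℝ^n. Let f^{(N)} ∈ ℝ^R be probability vectors converging componentwise to a probability vector f*, and let d_N ≥ 0 with d_N → 0. Let M_N be the set of minimizers over K of the distributionally robust objective x ↦ c(x) + sup_{f ∈ D(f^{(N)}, d_N)} Σ_{r=1}^R f^r Q(x, r), and let M* be the set of minimizers over K of the true objective x ↦ c(x) + Σ_{r=1}^R f*^r Q(x, r). Then sup_{x ∈ M_N} dist(x, M*) → 0 as N → ∞, where dist(x, M*) = inf_{y ∈ M*} ‖x − y‖. -/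
open Filter Metric Set

lemma aux_minimizer_conv {E : Type*} [MetricSpace E]
    {K : Set E} (hK : IsCompact K) (hKne : K.Nonempty)
    {g : E → ℝ} (hg : ContinuousOn g K)
    (G : ℕ → E → ℝ)
    (hunif : ∀ δ > (0:ℝ), ∀ᶠ N in Filter.atTop, ∀ x ∈ K, |G N x - g x| ≤ δ) :
    Filter.Tendsto (fun N => sSup ((fun x => Metric.infDist x {y ∈ K | g y = sInf (g '' K)}) ''
      {x ∈ K | G N x = sInf (G N '' K)})) Filter.atTop (nhds 0) := by
  obtain ⟨y0, hy0K, hy0min⟩ := hK.exists_isMinOn hKne hg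
  set m := sInf (g '' K) with hm
  have hbdd : BddBelow (g '' K) := ⟨g y0, by rintro _ ⟨z, hz, rfl⟩; exact hy0min hz⟩
  have hlb : ∀ x ∈ K, m ≤ g x := fun x hx => csInf_le hbdd ⟨x, hx, rfl⟩
  have hy0m : g y0 = m := le_antisymm
    (le_csInf (hKne.image g) (by rintro _ ⟨z, hz, rfl⟩; exact hy0min hz)) (hlb y0 hy0K)
  set Mstar := {y ∈ K | g y = m} with hMstar
  rw [Metric.tendsto_nhds]
  intro ε hε
  set S := {x ∈ K | ε/2 ≤ Metric.infDist x Mstar} with hS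
  have hSsub : S ⊆ K := fun x hx => hx.1
  have hScl : IsClosed S := by
    have : S = K ∩ {x | ε/2 ≤ Metric.infDist x Mstar} := rfl
    rw [this]
    exact hK.isClosed.inter (isClosed_le continuous_const (Metric.continuous_infDist_pt Mstar))
  have hScomp : IsCompact S := hK.of_isClosed_subset hScl hSsub
  obtain ⟨gap, hgap0, hgapS⟩ : ∃ gap > (0:ℝ), ∀ x ∈ S, m + gap ≤ g x := by
    rcases S.eq_empty_or_nonempty with hSe | hSne
    · exact ⟨1, one_pos, by simp [hSe]⟩
    · obtain ⟨xs, hxsS, hxsmin⟩ := hScomp.exists_isMinOn hSne (hg.mono hSsub)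
      refine ⟨g xs - m, ?_, ?_⟩
      · have h1 : m ≤ g xs := hlb xs hxsS.1
        rcases lt_or_eq_of_le h1 with h | h
        · linarith
        · exfalso
          have hmem : xs ∈ Mstar := ⟨hxsS.1, h.symm⟩
          have h0 : Metric.infDist xs Mstar = 0 := Metric.infDist_zero_of_mem hmem
          have h2 := hxsS.2
          rw [h0] at h2; linarith
      · intro x hx
        have h : g xs ≤ g x := hxsmin hx
        linarith
  filter_upwards [hunif (gap/3) (by linarith)] with N hN
  have hGbdd : BddBelow (G N '' K) := by
    refine ⟨m - gap/3, ?_⟩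
    rintro _ ⟨z, hz, rfl⟩
    have h1 := (abs_le.1 (hN z hz)).1
    have h2 := hlb z hz
    linarith
  have key : ∀ x ∈ {x ∈ K | G N x = sInf (G N '' K)}, Metric.infDist x Mstar ≤ ε/2 := by
    intro x hx
    have h1 : G N x ≤ G N y0 := hx.2 ▸ csInf_le hGbdd ⟨y0, hy0K, rfl⟩
    have h2 := abs_le.1 (hN x hx.1)
    have h3 := abs_le.1 (hN y0 hy0K)
    have hgx : g x < m + gap := by linarith [hy0m]
    have hxnotS : x ∉ S := fun hxS => by have := hgapS x hxS; linarith
    by_contra hcon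
    exact hxnotS ⟨hx.1, le_of_lt (not_le.1 hcon)⟩
  have hup : sSup ((fun x => Metric.infDist x Mstar) '' {x ∈ K | G N x = sInf (G N '' K)}) ≤ ε/2 := by
    apply Real.sSup_le
    · rintro _ ⟨z, hz, rfl⟩; exact key z hz
    · linarith
  have hlo : 0 ≤ sSup ((fun x => Metric.infDist x Mstar) '' {x ∈ K | G N x = sInf (G N '' K)}) := by
    apply Real.sSup_nonneg
    rintro _ ⟨z, hz, rfl⟩; exact Metric.infDist_nonneg
  rw [Real.dist_eq, sub_zero]
  rw [abs_of_nonneg hlo]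
  linarith

/-- The sets M_N of minimizers over K of the distributionally robust objective
x ↦ c(x) + sup_{f ∈ D(f^{(N)}, d_N)} Σ_r f^r Q(x,r) converge to the set M* of minimizers over
K of the true objective x ↦ c(x) + Σ_r f*^r Q(x,r), in the sense that
sup_{x ∈ M_N} dist(x, M*) → 0. -/
theorem robust_minimizer_sets_tendsto_true_minimizer_set
    (n R : ℕ) (hR : 1 ≤ R)
    (K : Set (EuclideanSpace ℝ (Fin n))) (hK : IsCompact K) (hKne : K.Nonempty)
    (c : EuclideanSpace ℝ (Fin n) → ℝ) (hc : Continuous c)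
    (Q : EuclideanSpace ℝ (Fin n) → Fin R → ℝ)
    (hQ : ∀ r, Continuous (fun x => Q x r))
    (fN : ℕ → Fin R → ℝ)
    (hfN : ∀ N, (∀ r, 0 ≤ fN N r) ∧ ∑ r, fN N r = 1)
    (fstar : Fin R → ℝ)
    (hfstar : (∀ r, 0 ≤ fstar r) ∧ ∑ r, fstar r = 1)
    (hconv : ∀ r, Filter.Tendsto (fun N => fN N r) Filter.atTop (nhds (fstar r)))
    (dN : ℕ → ℝ) (hdN : ∀ N, 0 ≤ dN N)
    (hd0 : Filter.Tendsto dN Filter.atTop (nhds 0)) :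
    Filter.Tendsto
      (fun N => sSup ((fun x => Metric.infDist x
          {y ∈ K | c y + (∑ r, fstar r * Q y r) =
            sInf ((fun z => c z + ∑ r, fstar r * Q z r) '' K)}) ''
        {x ∈ K |
          (c x + sSup ((fun f : Fin R → ℝ => ∑ r, f r * Q x r) ''
            {f | (∀ r, 0 ≤ f r ∧ |f r - fN N r| ≤ dN N) ∧ ∑ r, f r = 1})) =
          sInf ((fun z => c z +
            sSup ((fun f : Fin R → ℝ => ∑ r, f r * Q z r) ''
              {f | (∀ r, 0 ≤ f r ∧ |f r - fN N r| ≤ dN N) ∧ ∑ r, f r = 1})) '' K)}))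
      Filter.atTop (nhds 0) := by
  classical
  have hgcont : Continuous (fun z => c z + ∑ r, fstar r * Q z r) :=
    hc.add (continuous_finset_sum _ fun r _ => continuous_const.mul (hQ r))
  -- bound on ∑ |Q x r| over K
  have hφcont : Continuous (fun x => ∑ r, |Q x r|) :=
    continuous_finset_sum _ fun r _ => (hQ r).abs
  obtain ⟨xC, hxCK, hxCmax⟩ := hK.exists_isMaxOn hKne hφcont.continuousOn
  set C := ∑ r, |Q xC r| with hC
  have hC0 : 0 ≤ C := Finset.sum_nonneg fun r _ => abs_nonneg _
  have hCb : ∀ x ∈ K, ∑ r, |Q x r| ≤ C := fun x hx => hxCmax hx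
  apply aux_minimizer_conv hK hKne hgcont.continuousOn
  intro δ hδ
  set θ := δ / (2*(C+1)) with hθdef
  have hθ0 : 0 < θ := by positivity
  have hev1 : ∀ᶠ N in Filter.atTop, dN N < θ := hd0.eventually_lt_const hθ0
  have hev2 : ∀ᶠ N in Filter.atTop, ∀ r, |fN N r - fstar r| < θ := by
    rw [Filter.eventually_all]
    intro r
    have : Filter.Tendsto (fun N => |fN N r - fstar r|) Filter.atTop (nhds 0) := by
      have h := (hconv r).sub_const (fstar r)
      simpa using h.abs
    exact this.eventually_lt_const hθ0
  filter_upwards [hev1, hev2] with N hd hf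
  intro x hxK
  set D : Set (Fin R → ℝ) :=
    {f | (∀ r, 0 ≤ f r ∧ |f r - fN N r| ≤ dN N) ∧ ∑ r, f r = 1} with hD
  have hmemD : fN N ∈ D := ⟨fun r => ⟨(hfN N).1 r, by simp [hdN N]⟩, (hfN N).2⟩
  set t := ∑ r, fstar r * Q x r with ht
  have hsum : ∀ f ∈ D, |∑ r, f r * Q x r - t| ≤ δ := by
    intro f hfD
    have hterm : ∀ r : Fin R, |f r - fstar r| ≤ 2*θ := by
      intro r
      calc |f r - fstar r| ≤ |f r - fN N r| + |fN N r - fstar r| := abs_sub_le _ _ _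
        _ ≤ dN N + θ := add_le_add (hfD.1 r).2 (hf r).le
        _ ≤ θ + θ := by linarith [hd]
        _ = 2*θ := by ring
    calc |∑ r, f r * Q x r - t|
        = |∑ r, (f r - fstar r) * Q x r| := by
          rw [ht, ← Finset.sum_sub_distrib]
          exact congrArg abs (Finset.sum_congr rfl fun r _ => (sub_mul _ _ _).symm)
      _ ≤ ∑ r, |(f r - fstar r) * Q x r| := Finset.abs_sum_le_sum_abs _ _
      _ = ∑ r, |f r - fstar r| * |Q x r| := by simp [abs_mul]
      _ ≤ ∑ r, (2*θ) * |Q x r| :=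
          Finset.sum_le_sum fun r _ => mul_le_mul_of_nonneg_right (hterm r) (abs_nonneg _)
      _ = (2*θ) * ∑ r, |Q x r| := by rw [Finset.mul_sum]
      _ ≤ (2*θ) * (C+1) := by
          apply mul_le_mul_of_nonneg_left _ (by positivity)
          have := hCb x hxK; linarith
      _ = δ := by
          rw [hθdef]; field_simp
  have hAne : ((fun f : Fin R → ℝ => ∑ r, f r * Q x r) '' D).Nonempty :=
    ⟨_, Set.mem_image_of_mem _ hmemD⟩
  have hAbdd : BddAbove ((fun f : Fin R → ℝ => ∑ r, f r * Q x r) '' D) := by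
    refine ⟨t + δ, ?_⟩
    rintro _ ⟨f, hfD, rfl⟩
    have := (abs_le.1 (hsum f hfD)).2; linarith
  have hup : sSup ((fun f : Fin R → ℝ => ∑ r, f r * Q x r) '' D) ≤ t + δ := by
    apply csSup_le hAne
    rintro _ ⟨f, hfD, rfl⟩
    have := (abs_le.1 (hsum f hfD)).2; linarith
  have hlo : t - δ ≤ sSup ((fun f : Fin R → ℝ => ∑ r, f r * Q x r) '' D) := by
    have h1 : t - δ ≤ ∑ r, fN N r * Q x r := by
      have := (abs_le.1 (hsum (fN N) hmemD)).1; linarith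
    exact h1.trans (le_csSup hAbdd ⟨fN N, hmemD, rfl⟩)
  have heq : c x + sSup ((fun f : Fin R → ℝ => ∑ r, f r * Q x r) '' D) - (c x + t)
      = sSup ((fun f : Fin R → ℝ => ∑ r, f r * Q x r) '' D) - t := by ring
  rw [heq, abs_le]
  exact ⟨by linarith, by linarith⟩
end
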